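/- arXiv:2310.01256 — 5 statements merged into one kernel-verified Lean document; each statement's English description precedes it below -/
import Mathlib

section
/- The sequence defined by κ_1 = κ_2 = 1 and the three-term recursion κ_{n+1} = ((6n−3)/(n+1)) κ_n − ((n−2)/(n+1)) κ_{n−1} for n ≥ 2 satisfies κ_{n+1} ≤ (3 + √8) κ_n for all n ≥ 1. -/
theorem stmt3 (k : ℕ → ℝ) (h1 : k 1 = 1) (h2 : k 2 = 1)
    (hrec : ∀ n : ℕ, 2 ≤ n →
      k (n + 1) = ((6 * (n : ℝ) - 3) / ((n : ℝ) + 1)) * k n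
        - (((n : ℝ) - 2) / ((n : ℝ) + 1)) * k (n - 1)) :
    ∀ n : ℕ, 1 ≤ n → k (n + 1) ≤ (3 + Real.sqrt 8) * k n := by
  set c : ℝ := 3 + Real.sqrt 8 with hc
  have hs0 : 0 ≤ Real.sqrt 8 := Real.sqrt_nonneg 8
  have hs : Real.sqrt 8 ^ 2 = 8 := Real.sq_sqrt (by norm_num)
  have hcpos : (0 : ℝ) < c := by rw [hc]; positivity
  have hc2 : c * c = 6 * c - 1 := by rw [hc]; nlinarith [hs]
  have key : ∀ n : ℕ, 1 ≤ n → 0 < k n ∧ k n ≤ k (n + 1) ∧ k (n + 1) ≤ c * k n := by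
    intro n hn
    induction n with
    | zero => omega
    | succ m ih =>
      rcases Nat.lt_or_ge m 1 with hm | hm
      · interval_cases m
        refine ⟨by rw [h1]; norm_num, by rw [h1, h2], ?_⟩
        rw [h1, h2]; nlinarith [hs0]
      · obtain ⟨hp, hmono, hbd⟩ := ih hm
        have hrec' := hrec (m + 1) (by omega)
        have hmcast : (1 : ℝ) ≤ (m : ℝ) := by exact_mod_cast hm
        have hden : (0 : ℝ) < (m : ℝ) + 2 := by linarith
        have heq : ((m : ℝ) + 2) * k (m + 2) =
            (6 * (m : ℝ) + 3) * k (m + 1) - ((m : ℝ) - 1) * k m := by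
          have h : k (m + 1 + 1) = (6 * ((m : ℝ) + 1) - 3) / (((m : ℝ) + 1) + 1) * k (m + 1)
              - (((m : ℝ) + 1) - 2) / (((m : ℝ) + 1) + 1) * k (m + 1 - 1) := by
            rw [hrec']; push_cast; ring_nf
          simp only [Nat.add_sub_cancel] at h
          field_simp at h
          linarith [h]
        have hp1 : 0 < k (m + 1) := lt_of_lt_of_le hp hmono
        have hprod : 0 ≤ ((m : ℝ) - 1) * (c * k m - k (m + 1)) :=
          mul_nonneg (by linarith) (by linarith)
        refine ⟨hp1, ?_, ?_⟩
        · nlinarith [mul_nonneg (by linarith : (0:ℝ) ≤ (m : ℝ) - 1) (le_of_lt hp),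
            mul_le_mul_of_nonneg_left hmono (by linarith : (0:ℝ) ≤ (m : ℝ) - 1)]
        · nlinarith [hprod, mul_pos hcpos hp1, mul_pos hden hp1,
            mul_nonneg (le_of_lt hcpos) (le_of_lt hden)]
  intro n hn
  exact (key n hn).2.2
end

section
/- Let μ_1, ν_1, μ_2, ν_2 ≥ 0 and s_1, s_2 ≥ 1 be real numbers with s = max{s_1, s_2}. Then for every n ≥ 1, n! · Σ_{r=1}^{n} Σ_{(i_1,...,i_r) ∈ C(n,r)} (r!)^{s_2−1} μ_2 ν_2^r ∏_{j=1}^r (i_j!)^{s_1−1} μ_1 ν_1^{i_j} ≤ (n!)^s · μ_2 ν_2 μ_1 (ν_2 μ_1 + 1)^{n−1} ν_1^n. -/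
lemma aux_fact : ∀ (l : List ℕ), (∀ i ∈ l, 1 ≤ i) →
    l.length.factorial * (l.map Nat.factorial).prod ≤ l.sum.factorial := by
  intro l
  induction l with
  | nil => simp
  | cons a t ih =>
    intro h
    have ha : 1 ≤ a := h a (by simp)
    have ht : ∀ i ∈ t, 1 ≤ i := fun i hi => h i (by simp [hi])
    have hlt : t.length ≤ t.sum := List.length_le_sum_of_one_le t ht
    have ihh := ih ht
    simp only [List.length_cons, List.map_cons, List.prod_cons, List.sum_cons]
    have key : (t.length + 1) * (a.factorial * t.sum.factorial) ≤ (a + t.sum).factorial := by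
      have hc : (a + t.sum).choose a * a.factorial * t.sum.factorial = (a + t.sum).factorial := by
        have := Nat.choose_mul_factorial_mul_factorial (Nat.le_add_right a t.sum)
        simpa using this
      have hmono : (1 + t.sum).choose t.sum ≤ (a + t.sum).choose t.sum :=
        Nat.choose_le_choose t.sum (by omega)
      have h1 : (1 + t.sum).choose t.sum = t.sum + 1 := by
        rw [add_comm]; exact Nat.choose_succ_self_right t.sum
      have hsym : (a + t.sum).choose a = (a + t.sum).choose t.sum := by
        have := Nat.choose_symm (Nat.le_add_left t.sum a)
        simpa using this
      calc (t.length + 1) * (a.factorial * t.sum.factorial)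
          ≤ (t.sum + 1) * (a.factorial * t.sum.factorial) := by
            exact Nat.mul_le_mul_right _ (by omega)
        _ ≤ (a + t.sum).choose a * (a.factorial * t.sum.factorial) := by
            apply Nat.mul_le_mul_right
            omega
        _ = (a + t.sum).factorial := by rw [← hc]; ring
    calc (t.length + 1).factorial * (a.factorial * (t.map Nat.factorial).prod)
        = (t.length + 1) * (a.factorial * (t.length.factorial * (t.map Nat.factorial).prod)) := by
          rw [Nat.factorial_succ]; ring
      _ ≤ (t.length + 1) * (a.factorial * t.sum.factorial) := by
          apply Nat.mul_le_mul_left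
          exact Nat.mul_le_mul_left _ ihh
      _ ≤ (a + t.sum).factorial := key


lemma aux_card (n : ℕ) (hn : 1 ≤ n) (d : CompositionAsSet n) :
    (compositionAsSetEquiv n d).card + 1 = d.length := by
  classical
  have h0 : (0 : Fin (n+1)) ∈ d.boundaries := d.zero_mem
  have hl : Fin.last n ∈ d.boundaries := d.getLast_mem
  have hne : Fin.last n ≠ (0 : Fin (n+1)) := by
    simp [Fin.ext_iff]; omega
  set S := compositionAsSetEquiv n d with hS
  have hmem : ∀ i : Fin (n-1), i ∈ S ↔
      (⟨1 + (i : ℕ), by omega⟩ : Fin (n+1)) ∈ d.boundaries := by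
    intro i
    rw [hS]
    simp [compositionAsSetEquiv]
  have hcard : S.card = ((d.boundaries.erase 0).erase (Fin.last n)).card := by
    apply Finset.card_nbij (fun i : Fin (n-1) => (⟨1 + (i : ℕ), by omega⟩ : Fin (n+1)))
    · intro i hi
      have hi' := (hmem i).1 hi
      have h2 := i.2
      refine Finset.mem_erase.2 ⟨?_, Finset.mem_erase.2 ⟨?_, hi'⟩⟩
      · exact fun h => by simp [Fin.ext_iff] at h; omega
      · exact fun h => by simp [Fin.ext_iff] at h
    · intro i hi j hj hij
      simp only [Fin.mk.injEq] at hij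
      exact Fin.ext (by omega)
    · intro y hy
      have hy' := Finset.mem_coe.1 hy
      rw [Finset.mem_erase, Finset.mem_erase] at hy'
      obtain ⟨hy1, hy2, hy3⟩ := hy'
      have hyv : (y : ℕ) ≠ 0 := fun h => hy2 (Fin.ext (by simpa using h))
      have hyn : (y : ℕ) ≠ n := fun h => hy1 (Fin.ext (by simpa [Fin.val_last] using h))
      have hlt : (y : ℕ) < n + 1 := y.2
      refine ⟨⟨(y : ℕ) - 1, by omega⟩, ?_, ?_⟩
      · refine Finset.mem_coe.2 ((hmem _).2 ?_)
        have : (⟨1 + ((y:ℕ) - 1), by omega⟩ : Fin (n+1)) = y := Fin.ext (by simp; omega)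
        rwa [this]
      · exact Fin.ext (by simp; omega)
  have hby : d.boundaries.card = ((d.boundaries.erase 0).erase (Fin.last n)).card + 2 := by
    rw [Finset.card_erase_of_mem, Finset.card_erase_of_mem h0]
    · have h2 : 2 ≤ d.boundaries.card := Finset.one_lt_card.2 ⟨_, hl, _, h0, hne⟩
      omega
    · exact Finset.mem_erase.2 ⟨hne, hl⟩
  have hlen := d.card_boundaries_eq_succ_length
  omega


lemma aux_sum (n : ℕ) (hn : 1 ≤ n) (x : ℝ) :
    ∑ c : Composition n, x ^ (c.length - 1) = (x + 1) ^ (n - 1) := by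
  classical
  have hcard : ∀ c : Composition n,
      (((compositionEquiv n).trans (compositionAsSetEquiv n)) c).card = c.length - 1 := by
    intro c
    have h := aux_card n hn c.toCompositionAsSet
    rw [Composition.toCompositionAsSet_length] at h
    rw [Equiv.trans_apply]
    have hc : (compositionEquiv n) c = c.toCompositionAsSet := rfl
    rw [hc]
    omega
  rw [Fintype.sum_equiv ((compositionEquiv n).trans (compositionAsSetEquiv n)) _
    (fun S => x ^ S.card) (fun c => by simp only [hcard])]
  rw [← Finset.powerset_univ]
  have := Finset.prod_add (fun _ : Fin (n-1) => x) (fun _ => 1) Finset.univ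
  simp only [Finset.prod_const, Finset.card_univ, Fintype.card_fin, one_pow, mul_one] at this
  exact this.symm


theorem stmt5 (μ₁ ν₁ μ₂ ν₂ s₁ s₂ s : ℝ)
    (hμ₁ : 0 ≤ μ₁) (hν₁ : 0 ≤ ν₁) (hμ₂ : 0 ≤ μ₂) (hν₂ : 0 ≤ ν₂)
    (hs₁ : 1 ≤ s₁) (hs₂ : 1 ≤ s₂) (hs : s = max s₁ s₂)
    (n : ℕ) (hn : 1 ≤ n) :
    (n.factorial : ℝ) *
      ∑ r ∈ Finset.Icc 1 n,
        ∑ c ∈ Finset.univ.filter (fun c : Composition n => c.length = r),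
          ((r.factorial : ℝ) ^ (s₂ - 1) * μ₂ * ν₂ ^ r *
            (c.blocks.map (fun i => ((i.factorial : ℝ)) ^ (s₁ - 1) * μ₁ * ν₁ ^ i)).prod)
    ≤ ((n.factorial : ℝ)) ^ s * μ₂ * ν₂ * μ₁ * (ν₂ * μ₁ + 1) ^ (n - 1) * ν₁ ^ n := by
  classical
  have hs₁s : s₁ ≤ s := hs ▸ le_max_left _ _
  have hs₂s : s₂ ≤ s := hs ▸ le_max_right _ _
  have hss : 1 ≤ s := le_trans hs₁ hs₁s
  set x : ℝ := ν₂ * μ₁ with hxdef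
  have hx : 0 ≤ x := mul_nonneg hν₂ hμ₁
  set F : Composition n → ℝ := fun c =>
    ((c.length.factorial : ℝ) ^ (s₂ - 1) * μ₂ * ν₂ ^ c.length *
      (c.blocks.map (fun i => ((i.factorial : ℝ)) ^ (s₁ - 1) * μ₁ * ν₁ ^ i)).prod) with hF
  -- Step 1: merge the double sum
  have step1 :
      (∑ r ∈ Finset.Icc 1 n,
        ∑ c ∈ Finset.univ.filter (fun c : Composition n => c.length = r),
          ((r.factorial : ℝ) ^ (s₂ - 1) * μ₂ * ν₂ ^ r *
            (c.blocks.map (fun i => ((i.factorial : ℝ)) ^ (s₁ - 1) * μ₁ * ν₁ ^ i)).prod))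
      = ∑ c : Composition n, F c := by
    rw [← Finset.sum_fiberwise_of_maps_to (g := Composition.length)
      (t := Finset.Icc 1 n) (fun c _ => Finset.mem_Icc.2
        ⟨c.length_pos_of_pos (by omega), c.length_le⟩) F]
    refine Finset.sum_congr rfl fun r _ => Finset.sum_congr rfl fun c hc => ?_
    have hcr : c.length = r := (Finset.mem_filter.1 hc).2
    rw [hF]
    simp only [hcr]
  -- Step 2: pointwise bound
  have step2 : ∀ c : Composition n,
      F c ≤ ((n.factorial : ℝ) ^ (s - 1) * μ₂ * ν₁ ^ n * x) * x ^ (c.length - 1) := by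
    intro c
    set L := c.length with hL
    have hL1 : 1 ≤ L := c.length_pos_of_pos (by omega)
    -- rewrite blocks product via blocksFun
    have hprod : (c.blocks.map (fun i => ((i.factorial : ℝ)) ^ (s₁ - 1) * μ₁ * ν₁ ^ i)).prod
        = (∏ i : Fin L, ((c.blocksFun i).factorial : ℝ) ^ (s₁ - 1)) * μ₁ ^ L * ν₁ ^ n := by
      rw [← c.ofFn_blocksFun, List.map_ofFn, List.prod_ofFn]
      simp only [Function.comp]
      rw [Finset.prod_mul_distrib, Finset.prod_mul_distrib, Finset.prod_const,
        Finset.prod_pow_eq_pow_sum, c.sum_blocksFun]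
      simp [Finset.card_univ]
      exact Or.inl rfl
    -- factorial bound
    have hone : ∀ m : ℕ, (1:ℝ) ≤ (m.factorial : ℝ) := fun m => by
      exact_mod_cast Nat.one_le_iff_ne_zero.2 m.factorial_ne_zero
    have hfac1 : (∏ i : Fin L, ((c.blocksFun i).factorial : ℝ) ^ (s₁ - 1))
        ≤ (∏ i : Fin L, ((c.blocksFun i).factorial : ℝ) ^ (s - 1)) := by
      apply Finset.prod_le_prod
      · intro i _; positivity
      · intro i _
        exact Real.rpow_le_rpow_of_exponent_le (hone _) (by linarith)
    have hfac2 : ((L.factorial : ℝ)) ^ (s₂ - 1) ≤ ((L.factorial : ℝ)) ^ (s - 1) :=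
      Real.rpow_le_rpow_of_exponent_le (hone _) (by linarith)
    have hprodfac : (∏ i : Fin L, ((c.blocksFun i).factorial : ℝ) ^ (s - 1))
        = ((∏ i : Fin L, ((c.blocksFun i).factorial : ℝ))) ^ (s - 1) :=
      Real.finset_prod_rpow _ _ (fun i _ => by positivity) _
    have hcastprod : (∏ i : Fin L, ((c.blocksFun i).factorial : ℝ))
        = (((c.blocks.map Nat.factorial).prod : ℕ) : ℝ) := by
      rw [← c.ofFn_blocksFun, List.map_ofFn]
      push_cast
      rw [← List.prod_ofFn]
      simp [Function.comp_def]
      rfl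
    have hnatfact : (L.factorial * (c.blocks.map Nat.factorial).prod : ℕ) ≤ n.factorial := by
      have h := aux_fact c.blocks (fun i hi => c.one_le_blocks hi)
      rwa [c.blocks_length, c.blocks_sum, ← hL] at h
    have hkey : ((L.factorial : ℝ)) ^ (s₂ - 1) *
        (∏ i : Fin L, ((c.blocksFun i).factorial : ℝ) ^ (s₁ - 1))
        ≤ ((n.factorial : ℝ)) ^ (s - 1) := by
      calc ((L.factorial : ℝ)) ^ (s₂ - 1) *
          (∏ i : Fin L, ((c.blocksFun i).factorial : ℝ) ^ (s₁ - 1))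
          ≤ ((L.factorial : ℝ)) ^ (s - 1) *
            (∏ i : Fin L, ((c.blocksFun i).factorial : ℝ) ^ (s - 1)) := by
            apply mul_le_mul hfac2 hfac1 (by positivity) (by positivity)
        _ = (((L.factorial : ℝ)) * (((c.blocks.map Nat.factorial).prod : ℕ) : ℝ)) ^ (s - 1) := by
            rw [hprodfac, hcastprod, ← Real.mul_rpow (by positivity) (by positivity)]
        _ ≤ ((n.factorial : ℝ)) ^ (s - 1) := by
            apply Real.rpow_le_rpow (by positivity) _ (by linarith)
            exact_mod_cast hnatfact
    have hxpow : ν₂ ^ L * μ₁ ^ L = x * x ^ (L - 1) := by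
      rw [← mul_pow, ← hxdef]
      conv_lhs => rw [show L = (L - 1) + 1 by omega]
      rw [pow_succ]
      ring
    calc F c = (((L.factorial : ℝ)) ^ (s₂ - 1) *
          (∏ i : Fin L, ((c.blocksFun i).factorial : ℝ) ^ (s₁ - 1))) *
          (μ₂ * (ν₂ ^ L * μ₁ ^ L) * ν₁ ^ n) := by
          rw [hF]; simp only [← hL]; rw [hprod]; ring
      _ ≤ ((n.factorial : ℝ)) ^ (s - 1) * (μ₂ * (ν₂ ^ L * μ₁ ^ L) * ν₁ ^ n) := by
          apply mul_le_mul_of_nonneg_right hkey (by positivity)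
      _ = ((n.factorial : ℝ) ^ (s - 1) * μ₂ * ν₁ ^ n * x) * x ^ (L - 1) := by
          rw [hxpow]; ring
  -- Step 3: sum up
  rw [step1]
  have hsum : ∑ c : Composition n, F c
      ≤ ((n.factorial : ℝ) ^ (s - 1) * μ₂ * ν₁ ^ n * x) * (x + 1) ^ (n - 1) := by
    calc ∑ c : Composition n, F c
        ≤ ∑ c : Composition n,
          ((n.factorial : ℝ) ^ (s - 1) * μ₂ * ν₁ ^ n * x) * x ^ (c.length - 1) :=
          Finset.sum_le_sum fun c _ => step2 c
      _ = ((n.factorial : ℝ) ^ (s - 1) * μ₂ * ν₁ ^ n * x) *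
          ∑ c : Composition n, x ^ (c.length - 1) := by rw [← Finset.mul_sum]
      _ = _ := by rw [aux_sum n hn x]
  have hfpos : (0:ℝ) < (n.factorial : ℝ) := by positivity
  have hpow : (n.factorial : ℝ) * (n.factorial : ℝ) ^ (s - 1) = (n.factorial : ℝ) ^ s := by
    calc (n.factorial : ℝ) * (n.factorial : ℝ) ^ (s - 1)
        = (n.factorial : ℝ) ^ (1:ℝ) * (n.factorial : ℝ) ^ (s - 1) := by rw [Real.rpow_one]
      _ = (n.factorial : ℝ) ^ (1 + (s - 1)) := (Real.rpow_add hfpos _ _).symm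
      _ = _ := by ring_nf
  calc (n.factorial : ℝ) * ∑ c : Composition n, F c
      ≤ (n.factorial : ℝ) *
        (((n.factorial : ℝ) ^ (s - 1) * μ₂ * ν₁ ^ n * x) * (x + 1) ^ (n - 1)) :=
        mul_le_mul_of_nonneg_left hsum (le_of_lt hfpos)
    _ = ((n.factorial : ℝ)) ^ s * μ₂ * ν₂ * μ₁ * (ν₂ * μ₁ + 1) ^ (n - 1) * ν₁ ^ n := by
        rw [hxdef]
        linear_combination (μ₂ * ν₁ ^ n * (ν₂ * μ₁) * (ν₂ * μ₁ + 1) ^ (n - 1)) * hpow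
end

section
/- Let α, ς, Ϝ ≥ 1 be real numbers, s ≥ 1, and let (κ_n) be the Schröder–Hipparchus numbers with κ_1 = 1 and κ_n = Σ_{r=2}^{n} Σ_{i ∈ C(n,r)} ∏_j κ_{i_j} for n ≥ 2. Suppose a sequence (a_n)_{n≥1} of nonnegative reals satisfies a_1 ≤ α ς Ϝ and, for n ≥ 2, a_n ≤ α Σ_{r=2}^n Σ_{(i_1,...,i_r) ∈ C(n,r)} (n!/(r! i_1! ⋯ i_r!)) (r!)^s ς Ϝ^r ∏_{j=1}^r max(1, a_{i_j}'), where a_k' := (k!)^s α^{2k−1} ς^{2k−1} Ϝ^{3k−2} κ_k is an upper bound substituted for a_{i_j}. Then a_n ≤ (n!)^s α^{2n−1} ς^{2n−1} Ϝ^{3n−2} κ_n for all n ≥ 1. -/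
private lemma list_len_le_sum (L : List ℕ) (h : ∀ i ∈ L, 1 ≤ i) : L.length ≤ L.sum := by
  induction L with
  | nil => simp
  | cons x T ih =>
    have hx := h x (by simp)
    have hT := ih (fun i hi => h i (by simp [hi]))
    simp only [List.length_cons, List.sum_cons]
    omega

private lemma one_le_mul' {a b : ℝ} (ha : 1 ≤ a) (hb : 1 ≤ b) : 1 ≤ a * b := by
  nlinarith

private lemma list_one_le_prod (L : List ℝ) (h : ∀ x ∈ L, 1 ≤ x) : 1 ≤ L.prod := by
  induction L with
  | nil => simp
  | cons x T ih =>
    have hx := h x (by simp)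
    have hT := ih (fun i hi => h i (by simp [hi]))
    simpa using one_le_mul' hx hT

private lemma list_fact_le (L : List ℕ) (h : ∀ i ∈ L, 1 ≤ i) :
    L.length.factorial * (L.map Nat.factorial).prod ≤ L.sum.factorial := by
  induction L with
  | nil => simp
  | cons x T ih =>
    have hx : 1 ≤ x := h x (by simp)
    have hT : ∀ i ∈ T, 1 ≤ i := fun i hi => h i (by simp [hi])
    have ih' := ih hT
    have hlen : T.length ≤ T.sum := list_len_le_sum T hT
    simp only [List.length_cons, List.map_cons, List.prod_cons, List.sum_cons]
    have h1 : T.sum + 1 ≤ (x + T.sum).choose T.sum := by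
      calc T.sum + 1 = (T.sum + 1).choose T.sum := (Nat.choose_succ_self_right T.sum).symm
        _ ≤ (x + T.sum).choose T.sum := Nat.choose_le_choose T.sum (by omega)
    have h2 : (x + T.sum).choose T.sum * x.factorial * T.sum.factorial
        = (x + T.sum).factorial := Nat.add_choose_mul_factorial_mul_factorial x T.sum
    calc (T.length + 1).factorial * (x.factorial * (T.map Nat.factorial).prod)
        = (T.length + 1) * (x.factorial * (T.length.factorial * (T.map Nat.factorial).prod)) := by
          rw [Nat.factorial_succ]; ring
      _ ≤ (T.sum + 1) * (x.factorial * T.sum.factorial) := by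
          exact Nat.mul_le_mul (by omega) (Nat.mul_le_mul_left _ ih')
      _ ≤ (x + T.sum).choose T.sum * (x.factorial * T.sum.factorial) :=
          Nat.mul_le_mul_right _ h1
      _ = (x + T.sum).factorial := by rw [← h2]; ring

private lemma list_sum2 (L : List ℕ) (h : ∀ i ∈ L, 1 ≤ i) :
    (L.map (fun i => 2 * i - 1)).sum + L.length ≤ 2 * L.sum := by
  induction L with
  | nil => simp
  | cons x T ih =>
    have hx := h x (by simp)
    have hT := ih (fun i hi => h i (by simp [hi]))
    simp only [List.map_cons, List.sum_cons, List.length_cons]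
    omega

private lemma list_sum3 (L : List ℕ) (h : ∀ i ∈ L, 1 ≤ i) :
    (L.map (fun i => 3 * i - 2)).sum + 2 * L.length ≤ 3 * L.sum := by
  induction L with
  | nil => simp
  | cons x T ih =>
    have hx := h x (by simp)
    have hT := ih (fun i hi => h i (by simp [hi]))
    simp only [List.map_cons, List.sum_cons, List.length_cons]
    omega

private lemma list_block_lt (L : List ℕ) (h : ∀ i ∈ L, 1 ≤ i) (hlen : 2 ≤ L.length)
    {i : ℕ} (hi : i ∈ L) : i < L.sum := by
  obtain ⟨st, t, rfl⟩ := List.append_of_mem hi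
  have h1 : st.length ≤ st.sum := list_len_le_sum st (fun j hj => h j (by simp [hj]))
  have h2 : t.length ≤ t.sum := list_len_le_sum t (fun j hj => h j (by simp [hj]))
  simp only [List.sum_append, List.sum_cons, List.length_append, List.length_cons] at *
  omega

private lemma list_prod_rpow (s : ℝ) (L : List ℕ) :
    (L.map (fun i => ((i.factorial : ℝ)) ^ s)).prod
      = ((L.map (fun i => (i.factorial : ℝ))).prod) ^ s := by
  induction L with
  | nil => simp [Real.one_rpow]
  | cons x T ih =>
    have h1 : (0:ℝ) ≤ (x.factorial : ℝ) := by positivity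
    have h2 : (0:ℝ) ≤ (T.map (fun i => (i.factorial : ℝ))).prod := by
      refine le_trans zero_le_one (list_one_le_prod _ ?_)
      intro y hy
      simp only [List.mem_map] at hy
      obtain ⟨j, _, rfl⟩ := hy
      exact_mod_cast Nat.one_le_iff_ne_zero.mpr j.factorial_ne_zero
    simp only [List.map_cons, List.prod_cons, ih, Real.mul_rpow h1 h2]

private lemma list_prod_pow (x : ℝ) (f : ℕ → ℕ) (L : List ℕ) :
    (L.map (fun i => x ^ f i)).prod = x ^ (L.map f).sum := by
  induction L with
  | nil => simp
  | cons y T ih => simp [ih, pow_add]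

theorem stmt7 (α ς Ϝ s : ℝ) (hα : 1 ≤ α) (hς : 1 ≤ ς) (hϜ : 1 ≤ Ϝ) (hs : 1 ≤ s)
    (k : ℕ → ℝ) (hk1 : k 1 = 1)
    (hkrec : ∀ n, 2 ≤ n →
      k n = ∑ r ∈ Finset.Icc 2 n,
        ∑ c ∈ Finset.univ.filter (fun c : Composition n => c.length = r),
          (c.blocks.map k).prod)
    (a : ℕ → ℝ) (ha0 : ∀ n, 0 ≤ a n) (ha1 : a 1 ≤ α * ς * Ϝ)
    (harec : ∀ n, 2 ≤ n →
      a n ≤ α * ∑ r ∈ Finset.Icc 2 n,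
        ∑ c ∈ Finset.univ.filter (fun c : Composition n => c.length = r),
          ((n.factorial : ℝ) / ((r.factorial : ℝ) *
              (c.blocks.map (fun i => (i.factorial : ℝ))).prod)) *
            ((r.factorial : ℝ)) ^ s * ς * Ϝ ^ r *
            (c.blocks.map (fun i =>
              max 1 (((i.factorial : ℝ)) ^ s * α ^ (2 * i - 1) * ς ^ (2 * i - 1) *
                Ϝ ^ (3 * i - 2) * k i))).prod) :
    ∀ n, 1 ≤ n →
      a n ≤ ((n.factorial : ℝ)) ^ s * α ^ (2 * n - 1) * ς ^ (2 * n - 1) *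
        Ϝ ^ (3 * n - 2) * k n := by
  -- k is at least 1 everywhere
  have kge : ∀ n, 1 ≤ n → 1 ≤ k n := by
    intro n
    induction n using Nat.strong_induction_on with
    | _ n ih =>
      intro hn
      rcases eq_or_lt_of_le hn with h | h
      · rw [← h, hk1]
      · have h2 : 2 ≤ n := h
        rw [hkrec n h2]
        have hterm : ∀ r ∈ Finset.Icc 2 n,
            ∀ c ∈ Finset.univ.filter (fun c : Composition n => c.length = r),
            (1:ℝ) ≤ (c.blocks.map k).prod := by
          intro r hr c hc
          simp only [Finset.mem_Icc] at hr
          simp only [Finset.mem_filter] at hc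
          refine list_one_le_prod _ ?_
          intro y hy
          simp only [List.mem_map] at hy
          obtain ⟨j, hj, rfl⟩ := hy
          have hj1 : 1 ≤ j := c.one_le_blocks hj
          have hjlt : j < n := by
            have := list_block_lt c.blocks (fun i hi => c.one_le_blocks hi)
              (by rw [c.blocks_length, hc.2]; exact hr.1) hj
            rwa [c.blocks_sum] at this
          exact ih j hjlt hj1
        have hnonneg : ∀ r ∈ Finset.Icc 2 n,
            (0:ℝ) ≤ ∑ c ∈ Finset.univ.filter (fun c : Composition n => c.length = r),
              (c.blocks.map k).prod := by
          intro r hr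
          exact Finset.sum_nonneg (fun c hc => le_trans zero_le_one (hterm r hr c hc))
        have hmemn : n ∈ Finset.Icc 2 n := by simp [h2]
        have hones : Composition.ones n ∈
            Finset.univ.filter (fun c : Composition n => c.length = n) := by
          simp [Composition.ones_length]
        calc (1:ℝ) = ((Composition.ones n).blocks.map k).prod := by
              simp [Composition.ones_blocks, List.map_replicate, List.prod_replicate, hk1]
          _ ≤ ∑ c ∈ Finset.univ.filter (fun c : Composition n => c.length = n),
              (c.blocks.map k).prod :=
            Finset.single_le_sum
              (fun c hc => le_trans zero_le_one (hterm n hmemn c hc)) hones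
          _ ≤ ∑ r ∈ Finset.Icc 2 n,
              ∑ c ∈ Finset.univ.filter (fun c : Composition n => c.length = r),
              (c.blocks.map k).prod :=
            Finset.single_le_sum hnonneg hmemn
  intro n hn
  rcases eq_or_lt_of_le hn with h | h
  · rw [← h]
    simpa [hk1, Real.one_rpow] using ha1
  · have h2 : 2 ≤ n := h
    have hnfpos : (0:ℝ) < (n.factorial : ℝ) := by positivity
    set Cst : ℝ := ((n.factorial : ℝ)) ^ s * α ^ (2 * n - 2) * ς ^ (2 * n - 1) *
        Ϝ ^ (3 * n - 2) with hCst
    have key : ∀ r ∈ Finset.Icc 2 n,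
        ∀ c ∈ Finset.univ.filter (fun c : Composition n => c.length = r),
        ((n.factorial : ℝ) / ((r.factorial : ℝ) *
            (c.blocks.map (fun i => (i.factorial : ℝ))).prod)) *
          ((r.factorial : ℝ)) ^ s * ς * Ϝ ^ r *
          (c.blocks.map (fun i =>
            max 1 (((i.factorial : ℝ)) ^ s * α ^ (2 * i - 1) * ς ^ (2 * i - 1) *
              Ϝ ^ (3 * i - 2) * k i))).prod
        ≤ Cst * (c.blocks.map k).prod := by
      intro r hr c hc
      simp only [Finset.mem_Icc] at hr
      simp only [Finset.mem_filter] at hc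
      set L := c.blocks with hL
      have hone : ∀ i ∈ L, 1 ≤ i := fun i hi => c.one_le_blocks hi
      have hsum : L.sum = n := c.blocks_sum
      have hlen : L.length = r := by rw [hL, c.blocks_length, hc.2]
      -- remove the max
      have hmax : (L.map (fun i =>
          max 1 (((i.factorial : ℝ)) ^ s * α ^ (2 * i - 1) * ς ^ (2 * i - 1) *
            Ϝ ^ (3 * i - 2) * k i))).prod
          = (L.map (fun i =>
            ((i.factorial : ℝ)) ^ s * α ^ (2 * i - 1) * ς ^ (2 * i - 1) *
              Ϝ ^ (3 * i - 2) * k i)).prod := by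
        congr 1
        refine List.map_congr_left ?_
        intro i hi
        have hi1 : 1 ≤ i := hone i hi
        have f1 : (1:ℝ) ≤ ((i.factorial : ℝ)) ^ s :=
          Real.one_le_rpow (by exact_mod_cast Nat.one_le_iff_ne_zero.mpr i.factorial_ne_zero)
            (by linarith)
        have f2 : (1:ℝ) ≤ α ^ (2 * i - 1) := one_le_pow₀ hα
        have f3 : (1:ℝ) ≤ ς ^ (2 * i - 1) := one_le_pow₀ hς
        have f4 : (1:ℝ) ≤ Ϝ ^ (3 * i - 2) := one_le_pow₀ hϜ
        have f5 : (1:ℝ) ≤ k i := kge i hi1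
        exact max_eq_right (one_le_mul' (one_le_mul' (one_le_mul' (one_le_mul' f1 f2) f3) f4) f5)
      have hdec : (L.map (fun i =>
          ((i.factorial : ℝ)) ^ s * α ^ (2 * i - 1) * ς ^ (2 * i - 1) *
            Ϝ ^ (3 * i - 2) * k i)).prod
          = (L.map (fun i => ((i.factorial : ℝ)) ^ s)).prod *
            (L.map (fun i => α ^ (2 * i - 1))).prod *
            (L.map (fun i => ς ^ (2 * i - 1))).prod *
            (L.map (fun i => Ϝ ^ (3 * i - 2))).prod *
            (L.map k).prod := by
        simp only [List.prod_map_mul]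
      set P : ℝ := (L.map (fun i => (i.factorial : ℝ))).prod with hP
      set K : ℝ := (L.map k).prod with hK
      have hP1 : (1:ℝ) ≤ P := by
        refine list_one_le_prod _ ?_
        intro y hy
        simp only [List.mem_map] at hy
        obtain ⟨j, _, rfl⟩ := hy
        exact_mod_cast Nat.one_le_iff_ne_zero.mpr j.factorial_ne_zero
      have hK0 : (0:ℝ) ≤ K := by
        refine le_trans zero_le_one (list_one_le_prod _ ?_)
        intro y hy
        simp only [List.mem_map] at hy
        obtain ⟨j, hj, rfl⟩ := hy
        exact kge j (hone j hj)
      set Q : ℝ := (r.factorial : ℝ) * P with hQ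
      have hQ1 : (1:ℝ) ≤ Q := one_le_mul'
        (by exact_mod_cast Nat.one_le_iff_ne_zero.mpr r.factorial_ne_zero) hP1
      have hQpos : (0:ℝ) < Q := lt_of_lt_of_le one_pos hQ1
      -- Q ≤ n!
      have hQle : Q ≤ (n.factorial : ℝ) := by
        have hcast : P = (((L.map Nat.factorial).prod : ℕ) : ℝ) := by
          rw [Nat.cast_list_prod, List.map_map]
          rfl
        rw [hQ, hcast, ← Nat.cast_mul]
        have := list_fact_le L hone
        rw [hlen, hsum] at this
        exact_mod_cast this
      -- the combined factorial factor
      have hN : (n.factorial : ℝ) / Q * Q ^ s ≤ ((n.factorial : ℝ)) ^ s := by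
        have hsplit : ∀ x : ℝ, 0 < x → x ^ s = x * x ^ (s - 1) := by
          intro x hx
          have hx1 : x ^ s = x ^ ((1:ℝ) + (s - 1)) := by norm_num
          rw [hx1, Real.rpow_add hx, Real.rpow_one]
        rw [hsplit Q hQpos, hsplit _ hnfpos]
        have heq : (n.factorial : ℝ) / Q * (Q * Q ^ (s - 1)) = (n.factorial : ℝ) * Q ^ (s - 1) := by
          field_simp
        rw [heq]
        exact mul_le_mul_of_nonneg_left
          (Real.rpow_le_rpow hQpos.le hQle (by linarith)) hnfpos.le
      set A : ℕ := (L.map (fun i => 2 * i - 1)).sum with hA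
      set C : ℕ := (L.map (fun i => 3 * i - 2)).sum with hC
      have hA2 : A + r ≤ 2 * n := by
        have := list_sum2 L hone
        rwa [hlen, hsum] at this
      have hC2 : C + 2 * r ≤ 3 * n := by
        have := list_sum3 L hone
        rwa [hlen, hsum] at this
      have e1 : ((n.factorial : ℝ) / Q) *
          ((r.factorial : ℝ)) ^ s * ς * Ϝ ^ r *
          (((L.map (fun i => ((i.factorial : ℝ)) ^ s)).prod) *
            (L.map (fun i => α ^ (2 * i - 1))).prod *
            (L.map (fun i => ς ^ (2 * i - 1))).prod *
            (L.map (fun i => Ϝ ^ (3 * i - 2))).prod * K)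
          = ((n.factorial : ℝ) / Q * Q ^ s) * α ^ A * ς ^ (A + 1) * Ϝ ^ (C + r) * K := by
        rw [list_prod_rpow, list_prod_pow, list_prod_pow, list_prod_pow, ← hP, ← hA, ← hC]
        have hfac : (0:ℝ) ≤ (r.factorial : ℝ) := by positivity
        rw [hQ, Real.mul_rpow hfac (le_trans zero_le_one hP1)]
        rw [pow_succ, pow_add]
        ring
      rw [hmax, hdec, e1, hCst]
      have g1 : α ^ A ≤ α ^ (2 * n - 2) := pow_le_pow_right₀ hα (by omega)
      have g2 : ς ^ (A + 1) ≤ ς ^ (2 * n - 1) := pow_le_pow_right₀ hς (by omega)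
      have g3 : Ϝ ^ (C + r) ≤ Ϝ ^ (3 * n - 2) := pow_le_pow_right₀ hϜ (by omega)
      have p1 : (0:ℝ) ≤ α ^ A := by positivity
      have p2 : (0:ℝ) ≤ ς ^ (A + 1) := by positivity
      have p3 : (0:ℝ) ≤ Ϝ ^ (C + r) := by positivity
      have pN : (0:ℝ) ≤ (n.factorial : ℝ) / Q * Q ^ s := by positivity
      have pT : (0:ℝ) ≤ ((n.factorial : ℝ)) ^ s := by positivity
      have pa : (0:ℝ) ≤ α ^ (2 * n - 2) := by positivity
      have pb : (0:ℝ) ≤ ς ^ (2 * n - 1) := by positivity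
      refine mul_le_mul_of_nonneg_right ?_ hK0
      exact mul_le_mul (mul_le_mul (mul_le_mul hN g1 p1 pT) g2 p2 (by positivity))
        g3 p3 (by positivity)
    -- assemble
    refine (harec n h2).trans ?_
    have hsum_le : (∑ r ∈ Finset.Icc 2 n,
        ∑ c ∈ Finset.univ.filter (fun c : Composition n => c.length = r),
          ((n.factorial : ℝ) / ((r.factorial : ℝ) *
              (c.blocks.map (fun i => (i.factorial : ℝ))).prod)) *
            ((r.factorial : ℝ)) ^ s * ς * Ϝ ^ r *
            (c.blocks.map (fun i =>
              max 1 (((i.factorial : ℝ)) ^ s * α ^ (2 * i - 1) * ς ^ (2 * i - 1) *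
                Ϝ ^ (3 * i - 2) * k i))).prod)
        ≤ Cst * k n := by
      rw [hkrec n h2, Finset.mul_sum]
      refine Finset.sum_le_sum ?_
      intro r hr
      rw [Finset.mul_sum]
      exact Finset.sum_le_sum (fun c hc => key r hr c hc)
    have hα0 : (0:ℝ) ≤ α := by linarith
    refine le_trans (mul_le_mul_of_nonneg_left hsum_le hα0) (le_of_eq ?_)
    have h21 : 2 * n - 1 = (2 * n - 2) + 1 := by omega
    rw [hCst, h21, pow_succ]
    ring
end

section
/- Let s ≥ 1 and suppose f : ℝ → ℝ is smooth and for a compact set K = [−K₀, K₀] there are constants ς, Ϝ ≥ 1 with |f^{(n)}(ζ)| ≤ (n!)^s ς Ϝ^n for all ζ ∈ K and n ∈ ℕ. Then for any u, h with ‖u‖_∞ < K₀, ‖u + h‖_∞ < K₀ (sup norms of bounded functions on a set G), the composition operator N(u) = f ∘ u satisfies ‖N(u+h) − N(u) − (f' ∘ u)·h‖_∞ ≤ ((2!)^s/2) ς Ϝ² ‖h‖_∞². -/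
open intervalIntegral in
lemma key_taylor {f : ℝ → ℝ} (hf : ContDiff ℝ (⊤ : ℕ∞) f) {K₀ M : ℝ}
    (hM : ∀ ζ : ℝ, |ζ| ≤ K₀ → |deriv (deriv f) ζ| ≤ M)
    {a d : ℝ} (ha : |a| ≤ K₀) (had : |a + d| ≤ K₀) :
    |f (a + d) - f a - deriv f a * d| ≤ M / 2 * d ^ 2 := by
  obtain ⟨hfd, hfd'⟩ := contDiff_infty_iff_deriv.mp (hf.of_le (by simp))
  have hK0 : (0:ℝ) ≤ K₀ := le_trans (abs_nonneg a) ha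
  have hseg : ∀ t ∈ Set.Icc (0:ℝ) 1, |a + t * d| ≤ K₀ := by
    intro t ht
    have heq : a + t * d = (1 - t) * a + t * (a + d) := by ring
    rw [heq]
    calc |(1 - t) * a + t * (a + d)| ≤ |(1-t)*a| + |t*(a+d)| := abs_add_le _ _
      _ = (1-t)*|a| + t*|a+d| := by
          rw [abs_mul, abs_mul, abs_of_nonneg (by linarith [ht.2] : (0:ℝ) ≤ 1 - t),
            abs_of_nonneg ht.1]
      _ ≤ K₀ := by nlinarith [ht.1, ht.2, abs_nonneg a, abs_nonneg (a+d)]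
  have hlip : ∀ t ∈ Set.Icc (0:ℝ) 1, |deriv f (a + t * d) - deriv f a| ≤ M * (t * |d|) := by
    intro t ht
    have hconv : Convex ℝ (Set.Icc (-K₀) K₀) := convex_Icc _ _
    have := hconv.norm_image_sub_le_of_norm_deriv_le
      (f := deriv f) (C := M)
      (fun y _ => hfd'.differentiable (by simp) y)
      (fun y hy => hM y (abs_le.mpr ⟨hy.1, hy.2⟩))
      (abs_le.mp ha) (abs_le.mp (hseg t ht))
    simpa [Real.norm_eq_abs, add_sub_cancel_left, abs_mul,
      abs_of_nonneg ht.1, mul_assoc] using this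
  -- fundamental theorem of calculus for F t = f (a + t*d) - t * (deriv f a * d)
  set g : ℝ → ℝ := fun t => (deriv f (a + t * d) - deriv f a) * d with hg
  have hcont : Continuous g := by
    have : Continuous (deriv f) := hfd'.continuous
    fun_prop
  have hFTC : f (a + d) - f a - deriv f a * d = ∫ t in (0:ℝ)..1, g t := by
    have hder : ∀ t ∈ Set.uIcc (0:ℝ) 1,
        HasDerivAt (fun t : ℝ => f (a + t * d) - t * (deriv f a * d)) (g t) t := by
      intro t _
      have h1 : HasDerivAt (fun t : ℝ => a + t * d) d t := by
        simpa using ((hasDerivAt_id t).mul_const d).const_add a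
      have h2 : HasDerivAt (fun t : ℝ => f (a + t * d)) (deriv f (a + t * d) * d) t :=
        (hfd (a + t * d)).hasDerivAt.comp t h1
      have h3 : HasDerivAt (fun t : ℝ => t * (deriv f a * d)) (deriv f a * d) t := by
        simpa using (hasDerivAt_id t).mul_const (deriv f a * d)
      exact (h2.sub h3).congr_deriv (by simp only [hg]; ring)
    have := integral_eq_sub_of_hasDerivAt hder (hcont.intervalIntegrable 0 1)
    rw [this]; ring
  rw [hFTC]
  have hMnn : 0 ≤ M := le_trans (abs_nonneg _) (hM a ha)
  have hbound : |∫ t in (0:ℝ)..1, g t| ≤ |∫ t in (0:ℝ)..1, M * d ^ 2 * t| := by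
    rw [← Real.norm_eq_abs]
    apply intervalIntegral.norm_integral_le_abs_of_norm_le
    · refine (MeasureTheory.ae_restrict_iff' measurableSet_Ioc).mpr
        (MeasureTheory.ae_of_all _ fun t ht => ?_)
      simp only [min_self, min_eq_left, max_eq_right, zero_le_one] at ht
      have ht' : t ∈ Set.Icc (0:ℝ) 1 := ⟨le_of_lt ht.1, ht.2⟩
      have := hlip t ht'
      calc ‖g t‖ = |deriv f (a + t * d) - deriv f a| * |d| := by
            rw [Real.norm_eq_abs, hg, abs_mul]
        _ ≤ (M * (t * |d|)) * |d| := by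
            exact mul_le_mul_of_nonneg_right this (abs_nonneg d)
        _ = M * d ^ 2 * t := by
            rw [mul_assoc, mul_assoc, abs_mul_abs_self]; ring
    · exact (Continuous.intervalIntegrable (by fun_prop) 0 1)
  calc |∫ t in (0:ℝ)..1, g t| ≤ |∫ t in (0:ℝ)..1, M * d ^ 2 * t| := hbound
    _ = M * d ^ 2 * (1 / 2) := by
        rw [intervalIntegral.integral_const_mul, integral_id]
        rw [abs_of_nonneg (by positivity)]; norm_num
    _ = M / 2 * d ^ 2 := by ring

theorem stmt14 {G : Type*} [Nonempty G]
    (s : ℝ) (hs : 1 ≤ s) (f : ℝ → ℝ) (hf : ContDiff ℝ (⊤ : ℕ∞) f)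
    (K₀ ς Ϝ : ℝ) (hK₀ : 0 < K₀) (hς : 1 ≤ ς) (hϜ : 1 ≤ Ϝ)
    (hder : ∀ n : ℕ, ∀ ζ : ℝ, |ζ| ≤ K₀ →
      |iteratedDeriv n f ζ| ≤ ((n.factorial : ℝ)) ^ s * ς * Ϝ ^ n)
    (u h : G → ℝ)
    (hub : BddAbove (Set.range fun x => |u x|))
    (huhb : BddAbove (Set.range fun x => |u x + h x|))
    (hhb : BddAbove (Set.range fun x => |h x|))
    (hu : (⨆ x, |u x|) < K₀) (huh : (⨆ x, |u x + h x|) < K₀) :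
    (⨆ x, |f (u x + h x) - f (u x) - deriv f (u x) * h x|) ≤
      (((Nat.factorial 2 : ℝ)) ^ s / 2) * ς * Ϝ ^ 2 * (⨆ x, |h x|) ^ 2 := by
  set M : ℝ := ((Nat.factorial 2 : ℝ)) ^ s * ς * Ϝ ^ 2 with hMdef
  have hM : ∀ ζ : ℝ, |ζ| ≤ K₀ → |deriv (deriv f) ζ| ≤ M := by
    intro ζ hζ
    have := hder 2 ζ hζ
    simpa [iteratedDeriv_succ, iteratedDeriv_zero, hMdef] using this
  apply ciSup_le
  intro x
  have hux : |u x| ≤ K₀ := le_trans (le_ciSup hub x) hu.le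
  have huhx : |u x + h x| ≤ K₀ := le_trans (le_ciSup huhb x) huh.le
  have key := key_taylor hf hM hux huhx
  have hhx : |h x| ≤ ⨆ x, |h x| := le_ciSup hhb x
  have hM0 : 0 ≤ M := by
    rw [hMdef]; positivity
  calc |f (u x + h x) - f (u x) - deriv f (u x) * h x| ≤ M / 2 * (h x) ^ 2 := key
    _ ≤ M / 2 * (⨆ x, |h x|) ^ 2 := by
        apply mul_le_mul_of_nonneg_left _ (by positivity)
        rw [← sq_abs (h x)]
        exact pow_le_pow_left₀ (abs_nonneg _) hhx 2
    _ = (((Nat.factorial 2 : ℝ)) ^ s / 2) * ς * Ϝ ^ 2 * (⨆ x, |h x|) ^ 2 := by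
        rw [hMdef]; ring
end

section
/- For every multi-index α ∈ ℕ^(ℕ*) with finite support, α ≠ 0, and every r with 1 ≤ r ≤ |α| (where |α| = Σ α_n), one has the identity α! · Σ_{(β_1,...,β_r)} ∏_{j=1}^{r} |β_j|!/β_j! = |α|! · C(|α|−1, r−1), where the sum runs over all tuples of nonzero multi-indices β_1, ..., β_r with β_1 + ... + β_r = α. -/
open Finset Finsupp

def deg (γ : ℕ →₀ ℕ) : ℕ := γ.sum fun _ m => m
noncomputable def fac (γ : ℕ →₀ ℕ) : ℝ := γ.prod fun _ m => (m.factorial : ℝ)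
noncomputable def wgt (γ : ℕ →₀ ℕ) : ℝ := ((deg γ).factorial : ℝ) / fac γ

lemma deg_eq_zero_iff (γ : ℕ →₀ ℕ) : deg γ = 0 ↔ γ = 0 := by
  constructor
  · intro h
    ext i
    by_cases hi : i ∈ γ.support
    · have := Finset.sum_eq_zero_iff.mp h i hi
      simpa using this
    · simpa using Finsupp.notMem_support_iff.mp hi
  · rintro rfl; simp [deg]

lemma deg_single (a n : ℕ) : deg (Finsupp.single a n) = n := by
  simp [deg, Finsupp.sum_single_index]

lemma deg_add (γ δ : ℕ →₀ ℕ) : deg (γ + δ) = deg γ + deg δ := by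
  simp [deg, Finsupp.sum_add_index']

lemma fac_pos (γ : ℕ →₀ ℕ) : 0 < fac γ := by
  unfold fac Finsupp.prod
  apply Finset.prod_pos
  intro i _
  simp only []
  exact_mod_cast Nat.factorial_pos (γ i)

lemma lemA {M : Type*} [AddCommMonoid M] (a n : ℕ) (f : ℕ →₀ ℕ) (ha : f a = 0)
    (h : (ℕ →₀ ℕ) × (ℕ →₀ ℕ) → M) :
    ∑ p ∈ antidiagonal (Finsupp.single a n + f), h p
      = ∑ x ∈ antidiagonal n ×ˢ antidiagonal f,
          h (Finsupp.single a x.1.1 + x.2.1, Finsupp.single a x.1.2 + x.2.2) := by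
  refine Eq.symm (Finset.sum_nbij'
    (s := antidiagonal n ×ˢ antidiagonal f)
    (t := antidiagonal (Finsupp.single a n + f))
    (f := fun x => h (Finsupp.single a x.1.1 + x.2.1, Finsupp.single a x.1.2 + x.2.2))
    (g := h)
    (fun x => (Finsupp.single a x.1.1 + x.2.1, Finsupp.single a x.1.2 + x.2.2))
    (fun p => ((p.1 a, p.2 a), (p.1.erase a, p.2.erase a))) ?_ ?_ ?_ ?_ ?_)
  · rintro ⟨⟨j, k⟩, q1, q2⟩ hx
    simp only [Finset.mem_product, Finset.HasAntidiagonal.mem_antidiagonal] at hx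
    rw [Finset.HasAntidiagonal.mem_antidiagonal]
    obtain ⟨rfl, rfl⟩ := hx
    dsimp only
    rw [Finsupp.single_add]
    abel
  · rintro ⟨p1, p2⟩ hp
    rw [Finset.HasAntidiagonal.mem_antidiagonal] at hp
    simp only [Finset.mem_product, Finset.HasAntidiagonal.mem_antidiagonal]
    constructor
    · have := DFunLike.congr_fun hp a
      simp only [Finsupp.add_apply, Finsupp.single_eq_same, ha, add_zero] at this
      exact this
    · ext i
      have := DFunLike.congr_fun hp i
      by_cases hi : i = a
      · subst hi; simp [Finsupp.erase_apply, ha]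
      · simp only [Finsupp.add_apply, Finsupp.single_apply, if_neg (by omega : ¬ a = i),
          zero_add] at this
        simp [Finsupp.erase_apply, hi, this]
  · rintro ⟨⟨j, k⟩, q1, q2⟩ hx
    simp only [Finset.mem_product, Finset.HasAntidiagonal.mem_antidiagonal] at hx
    have hq1 : q1 a = 0 := by
      have : q1 a + q2 a = 0 := by rw [← Finsupp.add_apply, hx.2, ha]
      omega
    have hq2 : q2 a = 0 := by
      have : q1 a + q2 a = 0 := by rw [← Finsupp.add_apply, hx.2, ha]
      omega
    simp only [Prod.mk.injEq]
    refine ⟨⟨by simp [hq1], by simp [hq2]⟩, ?_, ?_⟩ <;>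
      · ext i
        by_cases hi : i = a <;>
          simp [hi, Finsupp.erase_apply, Finsupp.single_apply, hq1, hq2]
  · rintro ⟨p1, p2⟩ hp
    simp only [Prod.mk.injEq]
    constructor <;>
      · ext i
        by_cases hi : i = a
        · subst hi; simp [Finsupp.erase_apply]
        · simp [Finsupp.erase_apply, hi, Finsupp.single_apply, if_neg (by omega : ¬ a = i)]
  · intro x hx; rfl

noncomputable def W (α : ℕ →₀ ℕ) (k : ℕ) : ℕ :=
  ∑ p ∈ antidiagonal α, if deg p.1 = k then ∏ i ∈ α.support, (α i).choose (p.1 i) else 0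

lemma W_eq (α : ℕ →₀ ℕ) : ∀ k, W α k = (deg α).choose k := by
  induction α using Finsupp.induction with
  | zero =>
    intro k
    have : deg (0 : ℕ →₀ ℕ) = 0 := by simp [deg]
    rw [this]
    unfold W
    rw [Finsupp.antidiagonal_zero, Finset.sum_singleton]
    cases k <;> simp [this]
  | single_add a n f han hn ih =>
    intro k
    have hfa : f a = 0 := Finsupp.notMem_support_iff.mp han
    have hsupp : (Finsupp.single a n + f).support = insert a f.support := by
      rw [Finsupp.support_add_eq, Finsupp.support_single_ne_zero a hn]
      · ext i; simp
      · rw [Finsupp.support_single_ne_zero a hn]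
        simpa using han
    have hdeg : deg (Finsupp.single a n + f) = n + deg f := by
      rw [deg_add, deg_single]
    unfold W
    rw [lemA a n f hfa, Finset.sum_product]
    have hstep : ∀ x ∈ antidiagonal n,
        (∑ q ∈ antidiagonal f,
          if deg (Finsupp.single a x.1 + q.1) = k then
            ∏ i ∈ (Finsupp.single a n + f).support,
              ((Finsupp.single a n + f) i).choose ((Finsupp.single a x.1 + q.1) i)
          else 0)
        = if x.1 ≤ k then n.choose x.1 * (deg f).choose (k - x.1) else 0 := by
      rintro ⟨j, l⟩ hx
      dsimp only
      have hprod : ∀ q ∈ antidiagonal f,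
          (∏ i ∈ (Finsupp.single a n + f).support,
            ((Finsupp.single a n + f) i).choose ((Finsupp.single a j + q.1) i))
          = n.choose j * ∏ i ∈ f.support, (f i).choose (q.1 i) := by
        rintro ⟨q1, q2⟩ hq
        rw [Finset.HasAntidiagonal.mem_antidiagonal] at hq
        have hq1a : q1 a = 0 := by
          have : q1 a + q2 a = 0 := by rw [← Finsupp.add_apply, hq, hfa]
          omega
        rw [hsupp, Finset.prod_insert han]
        congr 1
        · simp [hfa, hq1a]
        · apply Finset.prod_congr rfl
          intro i hi
          have hia : ¬ a = i := by rintro rfl; exact han hi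
          simp [Finsupp.single_apply, if_neg hia]
      rw [Finset.sum_congr rfl (fun q hq => by
        rw [hprod q hq, deg_add, deg_single])]
      by_cases hjk : j ≤ k
      · rw [if_pos hjk, ← ih (k - j), W, Finset.mul_sum]
        apply Finset.sum_congr rfl
        intro q _
        have : j + deg q.1 = k ↔ deg q.1 = k - j := by omega
        simp only [this]
        split <;> simp
      · rw [if_neg hjk]
        apply Finset.sum_eq_zero
        intro q _
        rw [if_neg (by omega)]
    rw [Finset.sum_congr rfl hstep, hdeg,
      Finset.Nat.sum_antidiagonal_eq_sum_range_succ_mk]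
    rw [Nat.add_choose_eq n (deg f) k, Finset.Nat.sum_antidiagonal_eq_sum_range_succ_mk]
    have h1 : (∑ j ∈ Finset.range (n + 1),
          if j ≤ k then n.choose j * (deg f).choose (k - j) else 0)
        = ∑ j ∈ Finset.range (n + k + 1),
          if j ≤ k then n.choose j * (deg f).choose (k - j) else 0 := by
      apply Finset.sum_subset (Finset.range_subset_range.2 (by omega))
      intro x _ hx
      have hxn : n < x := by simpa using hx
      rw [Nat.choose_eq_zero_of_lt hxn]
      simp
    have h2 : (∑ i ∈ Finset.range (k + 1), n.choose i * (deg f).choose (k - i))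
        = ∑ j ∈ Finset.range (n + k + 1),
          if j ≤ k then n.choose j * (deg f).choose (k - j) else 0 := by
      rw [show (∑ i ∈ Finset.range (k + 1), n.choose i * (deg f).choose (k - i))
          = ∑ i ∈ Finset.range (k + 1),
              if i ≤ k then n.choose i * (deg f).choose (k - i) else 0 from
        Finset.sum_congr rfl fun i hi => by
          rw [if_pos (by simpa [Nat.lt_succ_iff] using hi)]]
      apply Finset.sum_subset (Finset.range_subset_range.2 (by omega))
      intro x _ hx
      have hxk : k < x := by simpa using hx
      rw [if_neg (by omega)]
    rw [h1, ← h2]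

lemma deg_antidiag {α : ℕ →₀ ℕ} {p : (ℕ →₀ ℕ) × (ℕ →₀ ℕ)} (hp : p ∈ antidiagonal α) :
    deg p.1 + deg p.2 = deg α := by
  rw [Finset.HasAntidiagonal.mem_antidiagonal] at hp
  rw [← hp, deg_add]

lemma moment (α : ℕ →₀ ℕ) (F : ℕ → ℝ) :
    (∑ p ∈ antidiagonal α, (∏ i ∈ α.support, ((α i).choose (p.1 i) : ℝ)) * F (deg p.1))
      = ∑ k ∈ Finset.range (deg α + 1), ((deg α).choose k : ℝ) * F k := by
  rw [← Finset.sum_fiberwise_of_maps_to (g := fun p => deg p.1)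
    (t := Finset.range (deg α + 1)) (fun p hp => by
      rw [Finset.mem_range, Nat.lt_succ_iff]
      exact (deg_antidiag hp) ▸ Nat.le_add_right _ _)]
  apply Finset.sum_congr rfl
  intro k _
  have : ∀ p ∈ Finset.filter (fun p => deg p.1 = k) (antidiagonal α),
      (∏ i ∈ α.support, ((α i).choose (p.1 i) : ℝ)) * F (deg p.1)
        = (∏ i ∈ α.support, ((α i).choose (p.1 i) : ℝ)) * F k := by
    intro p hp
    rw [(Finset.mem_filter.mp hp).2]
  rw [Finset.sum_congr rfl this, ← Finset.sum_mul]
  congr 1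
  have : (∑ p ∈ Finset.filter (fun p => deg p.1 = k) (antidiagonal α),
      ∏ i ∈ α.support, ((α i).choose (p.1 i) : ℝ)) = ((W α k : ℕ) : ℝ) := by
    rw [W, Finset.sum_filter]
    push_cast
    apply Finset.sum_congr rfl
    intro p _
    split <;> simp
  rw [this, W_eq]

lemma fac_factor {α : ℕ →₀ ℕ} {p : (ℕ →₀ ℕ) × (ℕ →₀ ℕ)} (hp : p ∈ antidiagonal α) :
    fac α = (∏ i ∈ α.support, ((α i).choose (p.1 i) : ℝ)) * (fac p.1 * fac p.2) := by
  rw [Finset.HasAntidiagonal.mem_antidiagonal] at hp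
  have hle1 : p.1.support ⊆ α.support := by
    intro i hi
    rw [Finsupp.mem_support_iff] at hi ⊢
    have : p.1 i + p.2 i = α i := by rw [← Finsupp.add_apply, hp]
    omega
  have hle2 : p.2.support ⊆ α.support := by
    intro i hi
    rw [Finsupp.mem_support_iff] at hi ⊢
    have : p.1 i + p.2 i = α i := by rw [← Finsupp.add_apply, hp]
    omega
  have e1 : fac p.1 = ∏ i ∈ α.support, ((p.1 i).factorial : ℝ) :=
    Finsupp.prod_of_support_subset _ hle1 _ (fun i _ => by simp)
  have e2 : fac p.2 = ∏ i ∈ α.support, ((p.2 i).factorial : ℝ) :=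
    Finsupp.prod_of_support_subset _ hle2 _ (fun i _ => by simp)
  have e0 : fac α = ∏ i ∈ α.support, ((α i).factorial : ℝ) := rfl
  rw [e0, e1, e2, ← Finset.prod_mul_distrib, ← Finset.prod_mul_distrib]
  apply Finset.prod_congr rfl
  intro i _
  have hsum : p.1 i + p.2 i = α i := by rw [← Finsupp.add_apply, hp]
  rw [← hsum]
  have h2 : ((p.1 i + p.2 i).factorial : ℝ)
      = ((p.1 i + p.2 i).choose (p.1 i) : ℝ) * (p.2 i).factorial * (p.1 i).factorial := by
    have := Nat.add_choose_mul_factorial_mul_factorial (p.2 i) (p.1 i)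
    rw [Nat.add_comm (p.2 i) (p.1 i)] at this
    exact_mod_cast this.symm
  rw [h2]
  ring

noncomputable def S : ℕ → (ℕ →₀ ℕ) → ℝ
  | 0, α => if α = 0 then 1 else 0
  | r+1, α => ∑ p ∈ antidiagonal α, if p.1 = 0 then 0 else wgt p.1 * S r p.2

noncomputable def G : ℕ → ℕ → ℝ
  | 0, m => if m = 0 then 1 else 0
  | r+1, m => if r + 1 ≤ m then (m.factorial : ℝ) * ((m - 1).choose r : ℝ) else 0

lemma S_zero (α : ℕ →₀ ℕ) : S 0 α = if α = 0 then 1 else 0 := rfl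
lemma S_succ (r : ℕ) (α : ℕ →₀ ℕ) :
    S (r+1) α = ∑ p ∈ antidiagonal α, if p.1 = 0 then 0 else wgt p.1 * S r p.2 := rfl
lemma G_zero (m : ℕ) : G 0 m = if m = 0 then 1 else 0 := rfl
lemma G_succ (r m : ℕ) :
    G (r+1) m = if r + 1 ≤ m then (m.factorial : ℝ) * ((m - 1).choose r : ℝ) else 0 := rfl

lemma final0 (N : ℕ) :
    (∑ k ∈ Finset.range (N+1), (N.choose k : ℝ) *
      (if k = 0 then 0 else (k.factorial : ℝ) * G 0 (N - k))) = G 1 N := by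
  rw [Finset.sum_eq_single N]
  · rw [G_zero, G_succ]
    by_cases hN : N = 0
    · subst hN; simp
    · rw [if_pos (by omega : 1 ≤ N)]
      simp [hN]
  · intro b hb hbne
    have hb' : b < N := by rw [Finset.mem_range] at hb; omega
    rw [G_zero, if_neg (by omega : ¬ N - b = 0)]
    simp
  · intro h
    exact absurd (Finset.self_mem_range_succ N) h

lemma finalS (r' N : ℕ) :
    (∑ k ∈ Finset.range (N+1), (N.choose k : ℝ) *
      (if k = 0 then 0 else (k.factorial : ℝ) * G (r'+1) (N - k))) = G (r'+2) N := by
  have hterm : ∀ k ∈ Finset.range (N+1),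
      (N.choose k : ℝ) * (if k = 0 then 0 else (k.factorial : ℝ) * G (r'+1) (N - k))
        = if 1 ≤ k ∧ k ≤ N - (r'+1) then (N.factorial : ℝ) * ((N - k - 1).choose r' : ℝ)
          else 0 := by
    intro k hk
    have hkN : k ≤ N := by rw [Finset.mem_range] at hk; omega
    rw [G_succ]
    by_cases h : 1 ≤ k ∧ k ≤ N - (r'+1)
    · rw [if_pos h, if_neg (by omega : ¬ k = 0), if_pos (by omega : r' + 1 ≤ N - k)]
      have hfact : (N.choose k : ℝ) * (k.factorial : ℝ) * ((N - k).factorial : ℝ)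
          = (N.factorial : ℝ) := by
        exact_mod_cast Nat.choose_mul_factorial_mul_factorial hkN
      rw [← hfact]
      ring
    · rw [if_neg h]
      by_cases hk0 : k = 0
      · rw [if_pos hk0, mul_zero]
      · rw [if_neg hk0, if_neg (by omega : ¬ r' + 1 ≤ N - k)]
        simp
  rw [Finset.sum_congr rfl hterm, Finset.sum_ite, Finset.sum_const_zero, add_zero]
  have hfs : Finset.filter (fun k => 1 ≤ k ∧ k ≤ N - (r'+1)) (Finset.range (N+1))
      = Finset.Icc 1 (N - (r'+1)) := by
    ext k
    simp only [Finset.mem_filter, Finset.mem_range, Finset.mem_Icc]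
    omega
  rw [hfs]
  by_cases hN : r' + 2 ≤ N
  · have hsum : (∑ k ∈ Finset.Icc 1 (N - (r'+1)), ((N - k - 1).choose r' : ℝ))
        = ((∑ m ∈ Finset.Icc r' (N - 2), m.choose r' : ℕ) : ℝ) := by
      push_cast
      refine Finset.sum_nbij' (fun k => N - 1 - k) (fun m => N - 1 - m) ?_ ?_ ?_ ?_ ?_
      · intro k hk; simp only [Finset.mem_Icc] at hk ⊢; omega
      · intro m hm; simp only [Finset.mem_Icc] at hm ⊢; omega
      · intro k hk; simp only [Finset.mem_Icc] at hk; omega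
      · intro m hm; simp only [Finset.mem_Icc] at hm; omega
      · intro k hk
        simp only [Finset.mem_Icc] at hk
        congr 2
        omega
    rw [← Finset.mul_sum, hsum, Nat.sum_Icc_choose, G_succ, if_pos hN]
    rw [show N - 2 + 1 = N - 1 by omega]
  · have : N - (r'+1) = 0 := by omega
    rw [this, show Finset.Icc 1 0 = ∅ from rfl, Finset.sum_empty, G_succ,
      if_neg (by omega : ¬ r' + 2 ≤ N)]

lemma master (r : ℕ) : ∀ α : ℕ →₀ ℕ, fac α * S r α = G r (deg α) := by
  induction r with
  | zero =>
    intro α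
    by_cases h : α = 0
    · subst h
      have h1 : fac (0 : ℕ →₀ ℕ) = 1 := by simp [fac]
      have h2 : deg (0 : ℕ →₀ ℕ) = 0 := by simp [deg]
      rw [S_zero, G_zero, h1, h2]
      simp
    · have hd : deg α ≠ 0 := fun hd => h ((deg_eq_zero_iff α).mp hd)
      rw [S_zero, G_zero, if_neg h, if_neg hd, mul_zero]
  | succ r ih =>
    intro α
    have hstep : ∀ p ∈ antidiagonal α,
        fac α * (if p.1 = 0 then 0 else wgt p.1 * S r p.2)
          = (∏ i ∈ α.support, ((α i).choose (p.1 i) : ℝ)) *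
            (if deg p.1 = 0 then 0
             else ((deg p.1).factorial : ℝ) * G r (deg α - deg p.1)) := by
      intro p hp
      by_cases h0 : p.1 = 0
      · rw [if_pos h0, if_pos ((deg_eq_zero_iff p.1).mpr h0)]
        simp
      · rw [if_neg h0, if_neg (fun hd => h0 ((deg_eq_zero_iff p.1).mp hd))]
        rw [fac_factor hp]
        have hd2 : deg p.2 = deg α - deg p.1 := by
          have := deg_antidiag hp; omega
        have hfw : fac p.1 * wgt p.1 = ((deg p.1).factorial : ℝ) := by
          rw [wgt, mul_div_cancel₀ _ (ne_of_gt (fac_pos p.1))]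
        rw [← hd2, ← ih p.2, ← hfw]
        ring
    rw [S_succ, Finset.mul_sum, Finset.sum_congr rfl hstep,
      moment α (fun k => if k = 0 then 0 else (k.factorial : ℝ) * G r (deg α - k))]
    cases r with
    | zero => exact final0 (deg α)
    | succ r' => exact finalS r' (deg α)

open scoped Classical in
noncomputable def E (r : ℕ) (α : ℕ →₀ ℕ) : Finset (Fin r → (ℕ →₀ ℕ)) :=
  (Fintype.piFinset fun _ => Finset.Iic α).filter
    (fun β => (∀ j, β j ≠ 0) ∧ ∑ j, β j = α)

lemma mem_E {r : ℕ} {α : ℕ →₀ ℕ} {β : Fin r → (ℕ →₀ ℕ)} :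
    β ∈ E r α ↔ (∀ j, β j ≠ 0) ∧ ∑ j, β j = α := by
  classical
  rw [E]
  simp only [Finset.mem_filter, Fintype.mem_piFinset, Finset.mem_Iic]
  constructor
  · tauto
  · intro h
    refine ⟨fun j => ?_, h⟩
    calc β j ≤ ∑ i, β i := Finset.single_le_sum (fun i _ => zero_le) (Finset.mem_univ j)
    _ = α := h.2

lemma sum_E : ∀ (r : ℕ) (α : ℕ →₀ ℕ), (∑ β ∈ E r α, ∏ j, wgt (β j)) = S r α := by
  intro r
  induction r with
  | zero =>
    intro α
    by_cases h : α = 0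
    · subst h
      have he : E 0 (0 : ℕ →₀ ℕ) = {fun x => Fin.elim0 x} := by
        ext b
        simp [mem_E, eq_iff_true_of_subsingleton]
      rw [he, Finset.sum_singleton, S_zero, if_pos rfl]
      simp
    · have he : E 0 α = ∅ := by
        ext b
        simp only [mem_E, Finset.notMem_empty, iff_false, not_and]
        intro _
        simpa using Ne.symm h
      rw [he, Finset.sum_empty, S_zero, if_neg h]
  | succ r ih =>
    intro α
    rw [S_succ]
    have h1 : ∀ p ∈ antidiagonal α,
        (if p.1 = 0 then (0:ℝ) else wgt p.1 * S r p.2)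
          = if p.1 ≠ 0 then wgt p.1 * S r p.2 else 0 := by
      intro p _
      by_cases h : p.1 = 0 <;> simp [h]
    rw [Finset.sum_congr rfl h1, ← Finset.sum_filter]
    have h2 : ∀ p ∈ (antidiagonal α).filter (fun p => p.1 ≠ 0),
        wgt p.1 * S r p.2 = ∑ b ∈ E r p.2, wgt p.1 * ∏ j, wgt (b j) := by
      intro p _
      rw [← Finset.mul_sum, ih p.2]
    rw [Finset.sum_congr rfl h2, Finset.sum_sigma']
    refine Finset.sum_nbij'
      (fun β => ⟨(β 0, ∑ j, Fin.tail β j), Fin.tail β⟩)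
      (fun x => Fin.cons x.1.1 x.2) ?_ ?_ ?_ ?_ ?_
    · intro β hβ
      rw [mem_E] at hβ
      rw [Finset.mem_sigma, Finset.mem_filter, Finset.HasAntidiagonal.mem_antidiagonal]
      refine ⟨⟨?_, by simpa using hβ.1 0⟩, ?_⟩
      · dsimp only
        rw [← hβ.2, Fin.sum_univ_succ]
        rfl
      · rw [mem_E]
        exact ⟨fun j => hβ.1 j.succ, rfl⟩
    · rintro ⟨p, b⟩ hx
      rw [Finset.mem_sigma, Finset.mem_filter, Finset.HasAntidiagonal.mem_antidiagonal] at hx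
      obtain ⟨⟨hpsum, hp1⟩, hb⟩ := hx
      rw [mem_E] at hb ⊢
      constructor
      · intro j
        refine Fin.cases ?_ ?_ j
        · simpa using hp1
        · intro i; simpa using hb.1 i
      · rw [Fin.sum_cons, hb.2, hpsum]
    · intro β _
      exact Fin.cons_self_tail β
    · rintro ⟨p, b⟩ hx
      rw [Finset.mem_sigma, Finset.mem_filter, Finset.HasAntidiagonal.mem_antidiagonal] at hx
      obtain ⟨⟨hpsum, hp1⟩, hb⟩ := hx
      rw [mem_E] at hb
      have ht : Fin.tail (Fin.cons (α := fun _ => ℕ →₀ ℕ) p.1 b) = b := Fin.tail_cons _ _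
      refine Sigma.ext ?_ ?_
      · show (Fin.cons (α := fun _ => ℕ →₀ ℕ) p.1 b 0,
            ∑ j, Fin.tail (Fin.cons (α := fun _ => ℕ →₀ ℕ) p.1 b) j) = p
        rw [Fin.cons_zero, ht, hb.2]
      · show HEq (Fin.tail (Fin.cons (α := fun _ => ℕ →₀ ℕ) p.1 b)) b
        rw [ht]
    · intro β hβ
      dsimp only
      rw [Fin.prod_univ_succ]
      rfl

theorem stmt16 (α : ℕ →₀ ℕ) (hα : α ≠ 0) (r : ℕ) (hr1 : 1 ≤ r)
    (hr : r ≤ α.sum fun _ m => m) :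
    (α.prod fun _ m => (m.factorial : ℝ)) *
      ∑ᶠ β : {β : Fin r → (ℕ →₀ ℕ) // (∀ j, β j ≠ 0) ∧ ∑ j, β j = α},
        ∏ j, ((((β : Fin r → (ℕ →₀ ℕ)) j).sum fun _ m => m).factorial : ℝ) /
          (((β : Fin r → (ℕ →₀ ℕ)) j).prod fun _ m => (m.factorial : ℝ))
    = (((α.sum fun _ m => m).factorial : ℝ)) *
        (((α.sum fun _ m => m) - 1).choose (r - 1) : ℝ) := by
  obtain ⟨r', rfl⟩ : ∃ r', r = r' + 1 := ⟨r - 1, by omega⟩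
  have hset : {β : Fin (r'+1) → (ℕ →₀ ℕ) | (∀ j, β j ≠ 0) ∧ ∑ j, β j = α}
      = ↑(E (r'+1) α) := by
    ext β
    simp [mem_E]
  have hfin : (∑ᶠ β : {β : Fin (r'+1) → (ℕ →₀ ℕ) // (∀ j, β j ≠ 0) ∧ ∑ j, β j = α},
      ∏ j, wgt ((β : Fin (r'+1) → (ℕ →₀ ℕ)) j)) = S (r'+1) α := by
    rw [finsum_subtype_eq_finsum_cond
      (f := fun β : Fin (r'+1) → (ℕ →₀ ℕ) => ∏ j, wgt (β j))
      (fun β : Fin (r'+1) → (ℕ →₀ ℕ) => (∀ j, β j ≠ 0) ∧ ∑ j, β j = α)]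
    have h2 : (∑ᶠ (β : Fin (r'+1) → (ℕ →₀ ℕ))
          (_ : (∀ j, β j ≠ 0) ∧ ∑ j, β j = α), ∏ j, wgt (β j))
        = ∑ᶠ β ∈ (↑(E (r'+1) α) : Set (Fin (r'+1) → (ℕ →₀ ℕ))), ∏ j, wgt (β j) := by
      rw [← hset]
      rfl
    rw [h2, finsum_mem_coe_finset, sum_E]
  change fac α * (∑ᶠ β : {β : Fin (r'+1) → (ℕ →₀ ℕ) // (∀ j, β j ≠ 0) ∧ ∑ j, β j = α},
      ∏ j, wgt ((β : Fin (r'+1) → (ℕ →₀ ℕ)) j))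
    = ((deg α).factorial : ℝ) * (((deg α - 1).choose (r' + 1 - 1) : ℕ) : ℝ)
  rw [hfin, master]
  have hr2 : r' + 1 ≤ deg α := hr
  rw [G_succ, if_pos hr2]
  norm_num
end
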